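/- The uncentered Hardy–Littlewood maximal operator M satisfies: for f = χ_{B(0,1)} the indicator of the unit ball in ℝⁿ, lim_{λ → 1⁻} λ · |{x ∈ ℝⁿ : M f(x) > λ}| = |B(0,1)| = ‖χ_{B(0,1)}‖_{L¹(ℝⁿ)}. -/

import Mathlib

/-!
Write `χ` for the indicator of the unit ball `B`. Since `0 ≤ χ ≤ 1`, `M χ ≤ 1`, and averaging over
`B` itself shows `M χ = 1` on `B`; hence `B ⊆ {M χ > λ}` for `λ < 1`. Conversely, if `M χ x > λ`
with `‖x‖ = 1 + 2r`, some ball `B' ∋ x` satisfies `|B ∩ B'| > λ |B'|`, so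
`|B' \ B| < (1 - λ) / λ · |B|`. Shrinking `B'` towards `x` gives a ball of radius `r` inside
`B' \ B`, whence `r ^ n < (1 - λ) / λ`. So `{M χ > λ}` is squeezed between `B` and the closed ball
of radius `1 + 2 ((1 - λ) / λ) ^ (1 / n)`, and both bounds on `λ |{M χ > λ}|` tend to `|B|`.
-/

open MeasureTheory

/-- The uncentered Hardy–Littlewood maximal function on ℝⁿ. -/
noncomputable def uncenteredMaximal (n : ℕ) (f : EuclideanSpace ℝ (Fin n) → ℝ)
    (x : EuclideanSpace ℝ (Fin n)) : ℝ :=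
  ⨆ (c : EuclideanSpace ℝ (Fin n)) (ρ : ℝ) (_ : x ∈ Metric.ball c ρ),
    (volume (Metric.ball c ρ)).toReal⁻¹ * ∫ y in Metric.ball c ρ, |f y|

open Metric Filter Topology Set

section Geometry

variable {E : Type*} [NormedAddCommGroup E] [NormedSpace ℝ E]

theorem exists_dist_le_ball_subset_ball {x c : E} {ρ r : ℝ} (hx : x ∈ ball c ρ) (hr : 0 ≤ r)
    (hrρ : r ≤ ρ) : ∃ z, dist x z ≤ r ∧ ball z r ⊆ ball c ρ := by
  have hρ : 0 < ρ := pos_of_mem_ball hx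
  have hxc : dist x c < ρ := hx
  have ht : r / ρ ≤ 1 := (div_le_one hρ).2 hrρ
  -- shrink `ball c ρ` towards `x` by the factor `r / ρ`
  refine ⟨AffineMap.lineMap x c (r / ρ), ?_, ball_subset_ball' ?_⟩
  · rw [dist_left_lineMap, Real.norm_of_nonneg (by positivity)]
    calc r / ρ * dist x c ≤ r / ρ * ρ := by gcongr
      _ = r := div_mul_cancel₀ r hρ.ne'
  · rw [dist_lineMap_right, Real.norm_of_nonneg (sub_nonneg.2 ht)]
    calc r + (1 - r / ρ) * dist x c ≤ r + (1 - r / ρ) * ρ := by gcongr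
      _ = ρ := by field_simp; ring

theorem exists_ball_subset_ball_diff_ball {x c : E} {ρ R r : ℝ} (hx : x ∈ ball c ρ)
    (hmeet : (ball (0 : E) R ∩ ball c ρ).Nonempty) (hr : 0 ≤ r) (hxR : R + 2 * r ≤ ‖x‖) :
    ∃ z, ball z r ⊆ ball c ρ \ ball (0 : E) R := by
  obtain ⟨y, hy, hyc⟩ := hmeet
  rw [mem_ball_zero_iff] at hy
  have hrρ : r ≤ ρ := by
    have hxy : ‖x‖ ≤ ‖y‖ + dist x y := by simpa [dist_eq_norm] using norm_le_norm_add_norm_sub' x y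
    have := dist_triangle_right x y c
    rw [mem_ball] at hx hyc
    linarith
  obtain ⟨z, hxz, hzc⟩ := exists_dist_le_ball_subset_ball hx hr hrρ
  refine ⟨z, fun w hw => ⟨hzc hw, fun hw1 => ?_⟩⟩
  have hxw : ‖x‖ ≤ ‖w‖ + dist x w := by simpa [dist_eq_norm] using norm_le_norm_add_norm_sub' x w
  have := dist_triangle x z w
  rw [mem_ball_zero_iff] at hw1
  rw [mem_ball'] at hw
  linarith

end Geometry

theorem MeasureTheory.Measure.addHaar_real_ball_of_pos {E : Type*} [NormedAddCommGroup E]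
    [NormedSpace ℝ E] [MeasurableSpace E] [BorelSpace E] [FiniteDimensional ℝ E] (μ : Measure E)
    [μ.IsAddHaarMeasure] (x : E) {r : ℝ} (hr : 0 < r) :
    μ.real (ball x r) = r ^ Module.finrank ℝ E * μ.real (ball (0 : E) 1) := by
  simp [measureReal_def, μ.addHaar_ball_of_pos x hr, hr.le]

theorem measureReal_ball_pos {X : Type*} [PseudoMetricSpace X] [ProperSpace X]
    [MeasurableSpace X] (μ : Measure X) [μ.IsOpenPosMeasure] [IsFiniteMeasureOnCompacts μ]
    (x : X) {r : ℝ} (hr : 0 < r) : 0 < μ.real (ball x r) :=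
  ENNReal.toReal_pos (measure_ball_pos μ x hr).ne' measure_ball_lt_top.ne

theorem setIntegral_abs_indicator_one {α : Type*} [MeasurableSpace α] {μ : Measure α}
    {s : Set α} (hs : MeasurableSet s) (u : Set α) :
    ∫ y in u, |s.indicator (fun _ => (1 : ℝ)) y| ∂μ = μ.real (s ∩ u) := by
  have habs : (fun y => |s.indicator (fun _ => (1 : ℝ)) y|) = s.indicator 1 := by
    ext y
    by_cases hy : y ∈ s <;> simp [hy]
  rw [habs, integral_indicator_one hs, measureReal_restrict_apply hs]

theorem measureReal_diff_lt_of_mul_lt_measureReal_inter {α : Type*} [MeasurableSpace α]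
    {μ : Measure α} {s u : Set α} {t : ℝ} (ht : 0 < t) (hs : MeasurableSet s) (hs_fin : μ s ≠ ⊤)
    (hu_fin : μ u ≠ ⊤) (h : t * μ.real u < μ.real (s ∩ u)) :
    μ.real (u \ s) < (1 - t) / t * μ.real s := by
  have hsplit := measureReal_inter_add_sdiff hs hu_fin
  have hsu : μ.real (s ∩ u) ≤ μ.real s := measureReal_mono inter_subset_left hs_fin
  rw [inter_comm] at hsplit
  have hdiff_nonneg : 0 ≤ μ.real (u \ s) := measureReal_nonneg
  have ht1 : t < 1 := by nlinarith [measureReal_nonneg (μ := μ) (s := u)]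
  rw [div_mul_eq_mul_div, lt_div_iff₀ ht]
  nlinarith

section Maximal

variable {n : ℕ}

local notation "𝔼" => EuclideanSpace ℝ (Fin n)

theorem uncenteredMaximal_le_of_forall {f : 𝔼 → ℝ} {x : 𝔼} {C : ℝ} (hC : 0 ≤ C)
    (h : ∀ c ρ, x ∈ ball c ρ → (volume.real (ball c ρ))⁻¹ * ∫ y in ball c ρ, |f y| ≤ C) :
    uncenteredMaximal n f x ≤ C :=
  Real.iSup_le (fun c => Real.iSup_le (fun ρ => Real.iSup_le (h c ρ) hC) hC) hC

theorem ballAverage_le_of_abs_le {f : 𝔼 → ℝ} {C : ℝ} (hf : ∀ y, |f y| ≤ C) (c : 𝔼) (ρ : ℝ) :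
    (volume.real (ball c ρ))⁻¹ * ∫ y in ball c ρ, |f y| ≤ C := by
  have hC : 0 ≤ C := (abs_nonneg _).trans (hf c)
  have hint : ∫ y in ball c ρ, |f y| ≤ C * volume.real (ball c ρ) :=
    (Real.le_norm_self _).trans (norm_setIntegral_le_of_norm_le_const measure_ball_lt_top
      fun y _ => by simpa only [Real.norm_eq_abs, abs_abs] using hf y)
  rcases eq_or_ne (volume.real (ball c ρ)) 0 with h0 | h0
  · simpa [h0] using hC
  · calc (volume.real (ball c ρ))⁻¹ * ∫ y in ball c ρ, |f y|
        ≤ (volume.real (ball c ρ))⁻¹ * (C * volume.real (ball c ρ)) := by gcongr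
      _ = C := by field_simp

theorem uncenteredMaximal_le_of_abs_le {f : 𝔼 → ℝ} {C : ℝ} (hf : ∀ y, |f y| ≤ C) (x : 𝔼) :
    uncenteredMaximal n f x ≤ C :=
  uncenteredMaximal_le_of_forall ((abs_nonneg _).trans (hf x))
    fun c ρ _ => ballAverage_le_of_abs_le hf c ρ

theorem ballAverage_le_uncenteredMaximal {f : 𝔼 → ℝ} {C : ℝ} (hf : ∀ y, |f y| ≤ C)
    {x c : 𝔼} {ρ : ℝ} (hx : x ∈ ball c ρ) :
    (volume.real (ball c ρ))⁻¹ * ∫ y in ball c ρ, |f y| ≤ uncenteredMaximal n f x := by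
  have hC : 0 ≤ C := (abs_nonneg _).trans (hf x)
  have hbdd : ∀ c' : 𝔼, ⨆ (ρ' : ℝ) (_ : x ∈ ball c' ρ'),
      (volume.real (ball c' ρ'))⁻¹ * ∫ y in ball c' ρ', |f y| ≤ C := fun c' =>
    Real.iSup_le (fun ρ' => Real.iSup_le (fun _ => ballAverage_le_of_abs_le hf c' ρ') hC) hC
  refine le_ciSup_of_le ⟨C, forall_mem_range.2 hbdd⟩ c (le_ciSup_of_le ?_ ρ
    (ciSup_pos (f := fun _ => (volume.real (ball c ρ))⁻¹ * ∫ y in ball c ρ, |f y|) hx).ge)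
  exact ⟨C, forall_mem_range.2 fun ρ' =>
    Real.iSup_le (fun _ => ballAverage_le_of_abs_le hf c ρ') hC⟩

theorem exists_lt_ballAverage_of_lt_uncenteredMaximal {f : 𝔼 → ℝ} {x : 𝔼} {t : ℝ} (ht : 0 ≤ t)
    (h : t < uncenteredMaximal n f x) :
    ∃ c ρ, x ∈ ball c ρ ∧ t < (volume.real (ball c ρ))⁻¹ * ∫ y in ball c ρ, |f y| := by
  by_contra! hle
  exact h.not_ge (uncenteredMaximal_le_of_forall ht hle)

local notation "χB" => Set.indicator (ball (0 : 𝔼) 1) (fun _ => (1 : ℝ))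

theorem abs_indicator_unitBall_le_one (y : 𝔼) : |χB y| ≤ 1 := by
  by_cases hy : y ∈ ball (0 : 𝔼) 1 <;> simp [hy]

theorem unitBall_subset_lt_uncenteredMaximal {t : ℝ} (ht : t < 1) :
    ball (0 : 𝔼) 1 ⊆ {x | t < uncenteredMaximal n χB x} := by
  intro x hx
  have hB := ballAverage_le_uncenteredMaximal abs_indicator_unitBall_le_one hx
  rw [setIntegral_abs_indicator_one measurableSet_ball, inter_self,
    inv_mul_cancel₀ (measureReal_ball_pos volume _ one_pos).ne'] at hB
  exact ht.trans_le hB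

theorem pow_half_sub_one_lt_of_lt_uncenteredMaximal {x : 𝔼} {t : ℝ} (ht : 0 < t) (hx : 1 < ‖x‖)
    (h : t < uncenteredMaximal n χB x) : ((‖x‖ - 1) / 2) ^ n < (1 - t) / t := by
  obtain ⟨c, ρ, hxc, havg⟩ := exists_lt_ballAverage_of_lt_uncenteredMaximal ht.le h
  rw [setIntegral_abs_indicator_one measurableSet_ball] at havg
  have hball_pos : 0 < volume.real (ball c ρ) := by
    by_contra! h0
    rw [le_antisymm h0 measureReal_nonneg, inv_zero, zero_mul] at havg
    exact ht.not_gt havg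
  have hmass := (lt_inv_mul_iff₀' hball_pos).1 havg
  have houtside := measureReal_diff_lt_of_mul_lt_measureReal_inter ht measurableSet_ball
    measure_ball_lt_top.ne measure_ball_lt_top.ne hmass
  have hmeet : (ball (0 : 𝔼) 1 ∩ ball c ρ).Nonempty :=
    nonempty_of_measure_ne_zero (μ := volume) fun h0 => by
      rw [measureReal_def _ (_ ∩ _), h0, ENNReal.toReal_zero] at hmass
      nlinarith
  set r := (‖x‖ - 1) / 2 with hr_def
  have hr : 0 < r := by linarith
  obtain ⟨z, hz⟩ := exists_ball_subset_ball_diff_ball hxc hmeet hr.le (by linarith)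
  refine lt_of_mul_lt_mul_right ?_ (measureReal_nonneg (μ := volume) (s := ball (0 : 𝔼) 1))
  calc r ^ n * volume.real (ball (0 : 𝔼) 1) = volume.real (ball z r) := by
        rw [volume.addHaar_real_ball_of_pos z hr, finrank_euclideanSpace_fin]
    _ ≤ volume.real (ball c ρ \ ball (0 : 𝔼) 1) := measureReal_mono hz
        (measure_ne_top_of_subset sdiff_subset measure_ball_lt_top.ne)
    _ < (1 - t) / t * volume.real (ball (0 : 𝔼) 1) := houtside

theorem lt_uncenteredMaximal_subset_closedBall {t : ℝ} (ht : 0 < t) :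
    {x | t < uncenteredMaximal n χB x} ⊆
      closedBall (0 : 𝔼) (1 + 2 * ((1 - t) / t) ^ (n : ℝ)⁻¹) := by
  intro x hx
  have ht1 : t < 1 := hx.trans_le (uncenteredMaximal_le_of_abs_le abs_indicator_unitBall_le_one x)
  have hq : 0 ≤ (1 - t) / t := div_nonneg (by linarith) ht.le
  rw [mem_closedBall_zero_iff]
  rcases le_or_gt ‖x‖ 1 with hx1 | hx1
  · linarith [Real.rpow_nonneg hq (n : ℝ)⁻¹]
  rcases n.eq_zero_or_pos with rfl | hn
  · norm_num [Subsingleton.elim x 0] at hx1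
  have hroot : (‖x‖ - 1) / 2 < ((1 - t) / t) ^ (n : ℝ)⁻¹ := by
    rw [Real.lt_rpow_inv_iff_of_pos (by linarith) hq (by positivity), Real.rpow_natCast]
    exact pow_half_sub_one_lt_of_lt_uncenteredMaximal ht hx1 hx
  linarith

theorem measureReal_unitBall_le_measureReal_lt_uncenteredMaximal {t : ℝ} (ht0 : 0 < t)
    (ht1 : t < 1) :
    volume.real (ball (0 : 𝔼) 1) ≤ volume.real {x | t < uncenteredMaximal n χB x} :=
  measureReal_mono (unitBall_subset_lt_uncenteredMaximal ht1)
    (measure_ne_top_of_subset (lt_uncenteredMaximal_subset_closedBall ht0)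
      measure_closedBall_lt_top.ne)

theorem measureReal_lt_uncenteredMaximal_le {t : ℝ} (ht0 : 0 < t) (ht1 : t < 1) :
    volume.real {x | t < uncenteredMaximal n χB x} ≤
      (1 + 2 * ((1 - t) / t) ^ (n : ℝ)⁻¹) ^ n * volume.real (ball (0 : 𝔼) 1) := by
  have hR : 0 ≤ 1 + 2 * ((1 - t) / t) ^ (n : ℝ)⁻¹ := by
    have := Real.rpow_nonneg (div_nonneg (sub_nonneg.2 ht1.le) ht0.le) (n : ℝ)⁻¹
    linarith
  calc volume.real {x | t < uncenteredMaximal n χB x}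
      ≤ volume.real (closedBall (0 : 𝔼) (1 + 2 * ((1 - t) / t) ^ (n : ℝ)⁻¹)) :=
        measureReal_mono (lt_uncenteredMaximal_subset_closedBall ht0)
          measure_closedBall_lt_top.ne
    _ = _ := by rw [Measure.addHaar_real_closedBall volume 0 hR, finrank_euclideanSpace_fin]

end Maximal

theorem tendsto_one_add_two_mul_rpow_inv_pow (n : ℕ) :
    Tendsto (fun t : ℝ => (1 + 2 * ((1 - t) / t) ^ (n : ℝ)⁻¹) ^ n) (𝓝 1) (𝓝 1) := by
  rcases n.eq_zero_or_pos with rfl | hn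
  · simp only [pow_zero]
    exact tendsto_const_nhds
  have hq : Tendsto (fun t : ℝ => (1 - t) / t) (𝓝 1) (𝓝 0) := by
    have hc : ContinuousAt (fun t : ℝ => (1 - t) / t) 1 :=
      (continuousAt_const.sub continuousAt_id).div continuousAt_id one_ne_zero
    simpa using hc.tendsto
  have hroot := (Real.continuousAt_rpow_const 0 (n : ℝ)⁻¹ (Or.inr (by positivity))).tendsto.comp hq
  simpa [Real.zero_rpow (inv_ne_zero (Nat.cast_ne_zero.2 hn.ne'))] using
    ((hroot.const_mul 2).const_add 1).pow n

theorem limiting_behavior_indicator_ball (n : ℕ) :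
    Filter.Tendsto
      (fun lam : ℝ =>
        lam * (volume {x : EuclideanSpace ℝ (Fin n) |
          lam < uncenteredMaximal n
            ((Metric.ball (0 : EuclideanSpace ℝ (Fin n)) 1).indicator
              (fun _ => (1 : ℝ))) x}).toReal)
      (nhdsWithin 1 (Set.Iio 1))
      (nhds ((volume (Metric.ball (0 : EuclideanSpace ℝ (Fin n)) 1)).toReal)) := by
  simp only [← measureReal_def]
  set v := volume.real (ball (0 : EuclideanSpace ℝ (Fin n)) 1)
  have hlower : Tendsto (fun t : ℝ => t * v) (𝓝[<] 1) (𝓝 v) := by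
    have h : Tendsto (fun t : ℝ => t * v) (𝓝 1) (𝓝 (1 * v)) := tendsto_id.mul_const v
    simpa using h.mono_left nhdsWithin_le_nhds
  have hupper : Tendsto (fun t : ℝ => t * ((1 + 2 * ((1 - t) / t) ^ (n : ℝ)⁻¹) ^ n * v))
      (𝓝[<] 1) (𝓝 v) := by
    have h : Tendsto (fun t : ℝ => t * ((1 + 2 * ((1 - t) / t) ^ (n : ℝ)⁻¹) ^ n * v))
        (𝓝 1) (𝓝 (1 * (1 * v))) :=
      tendsto_id.mul ((tendsto_one_add_two_mul_rpow_inv_pow n).mul_const v)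
    simpa using h.mono_left nhdsWithin_le_nhds
  have hunit : ∀ᶠ t in 𝓝[<] (1 : ℝ), t ∈ Ioo 0 1 := Ioo_mem_nhdsLT one_pos
  refine tendsto_of_tendsto_of_tendsto_of_le_of_le' hlower hupper ?_ ?_
  · filter_upwards [hunit] with t ht
    exact mul_le_mul_of_nonneg_left
      (measureReal_unitBall_le_measureReal_lt_uncenteredMaximal ht.1 ht.2) ht.1.le
  · filter_upwards [hunit] with t ht
    exact mul_le_mul_of_nonneg_left (measureReal_lt_uncenteredMaximal_le ht.1 ht.2) ht.1.le
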